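/- Let S be a commutative semiring and M a uniformly finitely presented S-semimodule, i.e., there exist n ∈ ℕ and a surjective S-linear map g : S^n → M that is k-uniform (whenever g(x) = g(y) there exist k, k' with g(k) = 0 = g(k') and x + k = y + k') and whose kernel submodule {x ∈ S^n | g(x) = 0} is finitely generated. Then for every index set Λ and every family {L_λ}_{λ∈Λ} of S-semimodules, the canonical S-linear map φ_M : M ⊗_S (∏_{λ∈Λ} L_λ) → ∏_{λ∈Λ} (M ⊗_S L_λ), m ⊗ (l_λ)_λ ↦ (m ⊗ l_λ)_λ, is bijective. -/

import Mathlib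

/-!
Present `M` by an exact sequence `Sᵐ --h--> Sⁿ --g--> M → 0`. For free modules `Sⁿ` the map
`φ` is bijective, since `Sⁿ ⊗ N ≃ Nⁿ` turns it into the swap of two product indices, and `φ`
is natural in `M`. Surjectivity of `φ_M` follows because `- ⊗ L` preserves surjections.
For injectivity, the key point is that over a semiring `- ⊗ L` is still right exact in the
sense of congruences, provided `g` is k-uniform: `x, y ∈ Sⁿ ⊗ L` with the same image
in `M ⊗ L` satisfy `x + (h ⊗ L) c = y + (h ⊗ L) c'` for some `c, c' ∈ Sᵐ ⊗ L`. Solving this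
coordinatewise in `λ` and gathering the witnesses with `φ_{Sᵐ}`, injectivity of `φ_{Sⁿ}` gives
the same relation in `Sⁿ ⊗ ∏ L_λ`, which `g ⊗ ∏ L_λ` maps to `u = v` in `M ⊗ ∏ L_λ`.
-/

open TensorProduct

universe u v w

def AddSubmonoid.bourneCon {A : Type*} [AddCommMonoid A] (N : AddSubmonoid A) : AddCon A where
  r u v := ∃ a ∈ N, ∃ b ∈ N, u + a = v + b
  iseqv :=
    { refl _ := ⟨0, N.zero_mem, 0, N.zero_mem, rfl⟩
      symm := fun ⟨a, ha, b, hb, h⟩ => ⟨b, hb, a, ha, h.symm⟩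
      trans := fun ⟨a, ha, b, hb, h⟩ ⟨a', ha', b', hb', h'⟩ =>
        ⟨a + a', N.add_mem ha ha', b' + b, N.add_mem hb' hb, by
          rw [← add_assoc, h, add_right_comm, h', add_assoc]⟩ }
  add' := fun ⟨a, ha, b, hb, h⟩ ⟨a', ha', b', hb', h'⟩ =>
    ⟨a + a', N.add_mem ha ha', b + b', N.add_mem hb hb', by
      rw [add_add_add_comm, h, h', add_add_add_comm]⟩

section

variable {S : Type*} [CommSemiring S]
  {P Q M : Type*} [AddCommMonoid P] [Module S P] [AddCommMonoid Q] [Module S Q]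
  [AddCommMonoid M] [Module S M]

def LinearMap.IsKUniform (g : P →ₗ[S] M) : Prop :=
  ∀ x y, g x = g y → ∃ k k', g k = 0 ∧ g k' = 0 ∧ x + k = y + k'

theorem LinearMap.exists_add_rTensor_eq_of_rTensor_eq {g : P →ₗ[S] M} {h : Q →ₗ[S] P}
    (hg : Function.Surjective g) (hgu : g.IsKUniform) (hgh : Function.Exact h g)
    (L : Type*) [AddCommMonoid L] [Module S L] {x y : P ⊗[S] L}
    (hxy : g.rTensor L x = g.rTensor L y) :
    ∃ c c', x + h.rTensor L c = y + h.rTensor L c' := by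
  let bourne := (LinearMap.range (h.rTensor L)).toAddSubmonoid.bourneCon
  have tmul_eq : ∀ a b, g a = g b → ∀ l : L, (↑(a ⊗ₜ[S] l) : bourne.Quotient) = ↑(b ⊗ₜ[S] l) := by
    intro a b hab l
    obtain ⟨k, k', hk, hk', hkk'⟩ := hgu a b hab
    obtain ⟨d, rfl⟩ := (hgh k).1 hk
    obtain ⟨d', rfl⟩ := (hgh k').1 hk'
    refine bourne.eq.2 ⟨_, ⟨d ⊗ₜ l, rfl⟩, _, ⟨d' ⊗ₜ l, rfl⟩, ?_⟩
    simp only [rTensor_tmul, ← add_tmul, hkk']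
  -- `m ⊗ l ↦ σ m ⊗ l` inverts `rTensor g` modulo the Bourne congruence of the image of `rTensor h`;
  -- k-uniformity of `g` makes it independent of the section `σ`.
  let σ := Function.surjInv hg
  have hσ : ∀ m, g (σ m) = m := Function.surjInv_eq hg
  let B : M →+ L →+ bourne.Quotient :=
    { toFun m := bourne.mk'.comp (TensorProduct.mk S P L (σ m)).toAddMonoidHom
      map_zero' := by
        ext l
        simpa using tmul_eq (σ 0) 0 (by simp [hσ]) l
      map_add' m m' := by
        ext l
        simpa [add_tmul] using tmul_eq (σ (m + m')) (σ m + σ m') (by simp [hσ]) l }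
  have hB : ∀ (r : S) m l, B (r • m) l = B m (r • l) := by
    intro r m l
    change (↑(σ (r • m) ⊗ₜ[S] l) : bourne.Quotient) = ↑(σ m ⊗ₜ[S] (r • l))
    rw [← smul_tmul]
    exact tmul_eq _ _ (by simp [hσ]) l
  have hlift : ∀ z, liftAddHom B hB (g.rTensor L z) = z := by
    intro z
    induction z using TensorProduct.induction_on with
    | zero => simp
    | tmul a l =>
      rw [rTensor_tmul, liftAddHom_tmul]
      exact tmul_eq _ _ (hσ _) l
    | add a b ha hb => simp [ha, hb]
  obtain ⟨_, ⟨c, rfl⟩, _, ⟨c', rfl⟩, hcc'⟩ := bourne.eq.1 ((hlift x).symm.trans (hxy ▸ hlift y))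
  exact ⟨c, c', hcc'⟩

namespace TensorProduct

variable {Λ : Type*} {L : Λ → Type*} [∀ l, AddCommMonoid (L l)] [∀ l, Module S (L l)]

theorem piRightHom_rTensor_apply (g : P →ₗ[S] M) (u : P ⊗[S] (∀ l, L l)) (l : Λ) :
    piRightHom S S M L (g.rTensor _ u) l = g.rTensor (L l) (piRightHom S S P L u l) := by
  induction u using TensorProduct.induction_on with
  | zero => simp
  | tmul p f => simp
  | add a b ha hb => simp [ha, hb]

theorem piRightHom_piScalar_bijective (ι : Type*) [Fintype ι] [DecidableEq ι] :
    Function.Bijective (piRightHom S S (ι → S) L) := by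
  let e := (TensorProduct.comm S (ι → S) (∀ l, L l)).trans (piScalarRight S S _ ι)
  let eL l := (TensorProduct.comm S (ι → S) (L l)).trans (piScalarRight S S (L l) ι)
  have he : ∀ u l i, eL l (piRightHom S S (ι → S) L u l) i = e u i l := by
    intro u l i
    induction u using TensorProduct.induction_on with
    | zero => simp
    | tmul x f => simp [e, eL]
    | add a b ha hb => simp [ha, hb]
  convert (e.toEquiv.trans ((Equiv.piComm _).trans
    (Equiv.piCongrRight fun l => (eL l).symm.toEquiv))).bijective
  funext u l
  apply (eL l).injective
  funext i
  simp [he]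

theorem piRightHom_surjective_of_surjective {g : P →ₗ[S] M} (hg : Function.Surjective g)
    (hP : Function.Surjective (piRightHom S S P L)) :
    Function.Surjective (piRightHom S S M L) := by
  intro f
  choose z hz using fun l => LinearMap.rTensor_surjective (L l) hg (f l)
  obtain ⟨u, hu⟩ := hP z
  exact ⟨g.rTensor _ u, funext fun l => by rw [piRightHom_rTensor_apply, hu, hz]⟩

theorem piRightHom_injective_of_exact {g : P →ₗ[S] M} {h : Q →ₗ[S] P}
    (hg : Function.Surjective g) (hgu : g.IsKUniform) (hgh : Function.Exact h g)
    (hP : Function.Injective (piRightHom S S P L))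
    (hQ : Function.Surjective (piRightHom S S Q L)) :
    Function.Injective (piRightHom S S M L) := by
  intro u v huv
  obtain ⟨x, rfl⟩ := LinearMap.rTensor_surjective _ hg u
  obtain ⟨y, rfl⟩ := LinearMap.rTensor_surjective _ hg v
  have hcomponent : ∀ l, ∃ a b, piRightHom S S P L x l + h.rTensor _ a
      = piRightHom S S P L y l + h.rTensor _ b := fun l =>
    LinearMap.exists_add_rTensor_eq_of_rTensor_eq hg hgu hgh (L l) <| by
      simpa only [piRightHom_rTensor_apply] using congr_fun huv l
  choose a b hab using hcomponent
  obtain ⟨A, rfl⟩ := hQ a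
  obtain ⟨B, rfl⟩ := hQ b
  have hxy : x + h.rTensor _ A = y + h.rTensor _ B :=
    hP <| funext fun l => by
      simpa only [Pi.add_apply, map_add, piRightHom_rTensor_apply] using hab l
  simpa [← LinearMap.rTensor_comp_apply, hgh.linearMap_comp_eq_zero] using
    congr_arg (g.rTensor _) hxy

end TensorProduct

end

theorem piRightHom_bijective_of_uniformly_finitely_presented
    (S : Type u) [CommSemiring S] (M : Type v) [AddCommMonoid M] [Module S M]
    (hM : ∃ (n : ℕ) (g : (Fin n → S) →ₗ[S] M),
      Function.Surjective g ∧
      (∀ x y : Fin n → S, g x = g y →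
        ∃ k k' : Fin n → S, g k = 0 ∧ g k' = 0 ∧ x + k = y + k') ∧
      (LinearMap.ker g).FG) :
    ∀ (Λ : Type w) (L : Λ → Type w)
      [∀ lam, AddCommMonoid (L lam)] [∀ lam, Module S (L lam)],
      Function.Bijective (TensorProduct.piRightHom S S M L) := by
  obtain ⟨n, g, hg, hgu, hker⟩ := hM
  obtain ⟨m, t, ht⟩ := Submodule.fg_iff_exists_fin_generating_family.mp hker
  have hexact : Function.Exact (Fintype.linearCombination S t) g :=
    LinearMap.exact_iff.mpr (by rw [Fintype.range_linearCombination, ht])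
  intro Λ L _ _
  exact ⟨piRightHom_injective_of_exact hg hgu hexact (piRightHom_piScalar_bijective _).1
      (piRightHom_piScalar_bijective _).2,
    piRightHom_surjective_of_surjective hg (piRightHom_piScalar_bijective _).2⟩
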